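/- arXiv:2402.12125 — 2 statements merged into one kernel-verified Lean document; each statement's English description precedes it below -/
import Mathlib

section
/- Let R ×_T S be a nontrivial fiber product ring with maximal ideal m. Suppose grade(mT, T) = n ≥ 0, grade(mR, R) > n and grade(mS, S) > n. Then depth(R ×_T S) = n + 1. -/
/-!
Common definitions: Betti numbers, Poincaré series, grade, depth, embedding
dimension, fiber product rings, and large homomorphisms.
-/

open CategoryTheory

universe u

/-- The length of a module, defined as the Krull dimension of its submodule
lattice (for a module annihilated by the maximal ideal of a local ring `A`,
this is its dimension as a vector space over the residue field `k = A/m_A`). -/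
noncomputable def modLength (A : Type u) [CommRing A]
    (M : Type u) [AddCommGroup M] [Module A M] : ℕ :=
  ((Order.krullDim (Submodule A M)).unbotD 0).toNat

/-- The `i`-th Betti number `β_i^A(M) = dim_k Tor_i^A(M, k)` of a module `M`
over a local ring `A` with residue field `k`. -/
noncomputable def betti (A : Type u) [CommRing A] [IsLocalRing A]
    (M : Type u) [AddCommGroup M] [Module A M] (i : ℕ) : ℕ :=
  modLength A (((Tor (ModuleCat.{u} A) i).obj (ModuleCat.of A M)).obj
      (ModuleCat.of A (IsLocalRing.ResidueField A)))

/-- The Poincaré series `P^A_M(t) = Σ_{i≥0} β_i^A(M) tⁱ`, as a formal power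
series with rational coefficients. -/
noncomputable def poincare (A : Type u) [CommRing A] [IsLocalRing A]
    (M : Type u) [AddCommGroup M] [Module A M] : PowerSeries ℚ :=
  PowerSeries.mk fun i => (betti A M i : ℚ)

/-- `grade(I, M)`: the length of the longest `M`-regular sequence contained in
the ideal `I`. -/
noncomputable def mgrade (A : Type u) [CommRing A] (I : Ideal A)
    (M : Type u) [AddCommGroup M] [Module A M] : ℕ∞ :=
  sSup {n : ℕ∞ | ∃ rs : List A, (∀ r ∈ rs, r ∈ I) ∧
    RingTheory.Sequence.IsRegular M rs ∧ n = rs.length}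

/-- `depth(A) = grade(m_A, A)` for a local ring `A`. -/
noncomputable def rdepth (A : Type u) [CommRing A] [IsLocalRing A] : ℕ∞ :=
  mgrade A (IsLocalRing.maximalIdeal A) A

/-- The embedding dimension `edim(A) = dim_k (m_A / m_A²)`. -/
noncomputable def edim (A : Type u) [CommRing A] [IsLocalRing A] : ℕ :=
  Module.finrank (IsLocalRing.ResidueField A) (IsLocalRing.CotangentSpace A)

/-- `M` has finite projective dimension: it admits a projective resolution
which vanishes in all sufficiently large degrees. -/
def HasFiniteProjDim (A : Type u) [CommRing A]
    (M : Type u) [AddCommGroup M] [Module A M] : Prop :=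
  ∃ (P : CategoryTheory.ProjectiveResolution (ModuleCat.of A M)) (n : ℕ),
    ∀ i : ℕ, n < i → CategoryTheory.Limits.IsZero (P.complex.X i)

/-- The fiber product `R ×_T S = {(r, s) : π_R r = π_S s}` as a subring of `R × S`. -/
def fiberProd {R S T : Type u} [CommRing R] [CommRing S] [CommRing T]
    (πR : R →+* T) (πS : S →+* T) : Subring (R × S) :=
  RingHom.eqLocus (πR.comp (RingHom.fst R S)) (πS.comp (RingHom.snd R S))

/-- The first natural projection `η_R : R ×_T S → R`. -/
def etaR {R S T : Type u} [CommRing R] [CommRing S] [CommRing T]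
    (πR : R →+* T) (πS : S →+* T) : ↥(fiberProd πR πS) →+* R :=
  (RingHom.fst R S).comp (fiberProd πR πS).subtype

/-- The second natural projection `η_S : R ×_T S → S`. -/
def etaS {R S T : Type u} [CommRing R] [CommRing S] [CommRing T]
    (πR : R →+* T) (πS : S →+* T) : ↥(fiberProd πR πS) →+* S :=
  (RingHom.snd R S).comp (fiberProd πR πS).subtype

/-- The extension `mR` of the maximal ideal `m` of `R ×_T S` to `R` under `η_R`. -/
noncomputable def mExtR {R S T : Type u} [CommRing R] [CommRing S] [CommRing T]
    (πR : R →+* T) (πS : S →+* T) [IsLocalRing ↥(fiberProd πR πS)] : Ideal R :=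
  Ideal.map (etaR πR πS) (IsLocalRing.maximalIdeal ↥(fiberProd πR πS))

/-- The extension `mS` of the maximal ideal `m` of `R ×_T S` to `S` under `η_S`. -/
noncomputable def mExtS {R S T : Type u} [CommRing R] [CommRing S] [CommRing T]
    (πR : R →+* T) (πS : S →+* T) [IsLocalRing ↥(fiberProd πR πS)] : Ideal S :=
  Ideal.map (etaS πR πS) (IsLocalRing.maximalIdeal ↥(fiberProd πR πS))

/-- The extension `mT` of the maximal ideal `m` of `R ×_T S` to `T` under the
natural surjection `π_R ∘ η_R`. -/
noncomputable def mExtT {R S T : Type u} [CommRing R] [CommRing S] [CommRing T]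
    (πR : R →+* T) (πS : S →+* T) [IsLocalRing ↥(fiberProd πR πS)] : Ideal T :=
  Ideal.map (πR.comp (etaR πR πS)) (IsLocalRing.maximalIdeal ↥(fiberProd πR πS))

/-- A ring homomorphism `f : A → B` between local rings is *large* if
`P^A_N(t) = P^B_N(t) · P^A_B(t)` for every finitely generated nonzero
`B`-module `N`, viewed as an `A`-module via `f`. -/
def IsLargeHom {A B : Type u} [CommRing A] [IsLocalRing A] [CommRing B] [IsLocalRing B]
    (f : A →+* B) : Prop :=
  ∀ (N : Type u) [AddCommGroup N] [Module B N], Module.Finite B N → Nontrivial N →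
    letI : Module A N := Module.compHom N f
    letI : Module A B := Module.compHom B f
    poincare A N = poincare B N * poincare A B

/-!
View `R ×_T S → R × S → T`, `(r, s) ↦ π_R r - π_S s`, as a short exact sequence of
`R ×_T S`-modules. Since `η_R`, `η_S` and `π_R ∘ η_R` are surjective, the grades of `R`, `S`,
`T` on the extended maximal ideals are their depths as `R ×_T S`-modules. By Rees' theorem
the depth of a module `M` is the least `i` with `Ext^i(k, M) ≠ 0`. As `depth (R × S) ≥ n + 1`
and `depth T = n`, the long exact `Ext(k, -)` sequence gives `Ext^i(k, R ×_T S) = 0` for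
`i ≤ n` and an injection `Ext^n(k, T) ↪ Ext^{n+1}(k, R ×_T S)`.
-/

open Abelian IsLocalRing RingTheory.Sequence

namespace CategoryTheory.Abelian.Ext

variable {C : Type*} [Category C] [Abelian C] [HasExt C] {X : C}
  {S : ShortComplex C} (hS : S.ShortExact)
include hS

lemma subsingleton_X₂_of_shortExact {n : ℕ} (h₁ : Subsingleton (Ext X S.X₁ n))
    (h₃ : Subsingleton (Ext X S.X₃ n)) : Subsingleton (Ext X S.X₂ n) := by
  refine subsingleton_of_forall_eq 0 fun x₂ => ?_
  obtain ⟨x₁, rfl⟩ := covariant_sequence_exact₂ X hS x₂ (Subsingleton.elim _ _)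
  rw [Subsingleton.elim x₁ 0, zero_comp]

lemma subsingleton_X₁_of_shortExact {n : ℕ} (h₂ : Subsingleton (Ext X S.X₂ (n + 1)))
    (h₃ : Subsingleton (Ext X S.X₃ n)) : Subsingleton (Ext X S.X₁ (n + 1)) := by
  refine subsingleton_of_forall_eq 0 fun x₁ => ?_
  obtain ⟨x₃, rfl⟩ := covariant_sequence_exact₁ X hS x₁ (Subsingleton.elim _ _) rfl
  rw [Subsingleton.elim x₃ 0, zero_comp]

lemma subsingleton_X₁_zero_of_shortExact (h₂ : Subsingleton (Ext X S.X₂ 0)) :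
    Subsingleton (Ext X S.X₁ 0) :=
  have := hS.mono_f
  (postcomp_mk₀_injective_of_mono X S.f).subsingleton

lemma subsingleton_X₃_of_shortExact {n : ℕ} (h₂ : Subsingleton (Ext X S.X₂ n))
    (h₁ : Subsingleton (Ext X S.X₁ (n + 1))) : Subsingleton (Ext X S.X₃ n) := by
  refine subsingleton_of_forall_eq 0 fun x₃ => ?_
  obtain ⟨x₂, rfl⟩ := covariant_sequence_exact₃ X hS x₃ rfl (Subsingleton.elim _ _)
  rw [Subsingleton.elim x₂ 0, zero_comp]

lemma subsingleton_X₁_of_le {n : ℕ} (h₂ : ∀ i ≤ n, Subsingleton (Ext X S.X₂ i))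
    (h₃ : ∀ i < n, Subsingleton (Ext X S.X₃ i)) : ∀ i ≤ n, Subsingleton (Ext X S.X₁ i)
  | 0, _ => subsingleton_X₁_zero_of_shortExact hS (h₂ 0 (Nat.zero_le n))
  | i + 1, hi => subsingleton_X₁_of_shortExact hS (h₂ (i + 1) hi) (h₃ i hi)

end CategoryTheory.Abelian.Ext

section Depth

variable {A : Type u} [CommRing A] [IsLocalRing A] [IsNoetherianRing A]

variable (A) in
noncomputable abbrev residueModule : ModuleCat.{u} A :=
  ModuleCat.of A (Shrink.{u} (A ⧸ maximalIdeal A))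

lemma le_mgrade_maximalIdeal_iff_subsingleton_ext (M : Type u) [AddCommGroup M] [Module A M]
    [Module.Finite A M] [Nontrivial M] (k : ℕ) :
    (k : ℕ∞) ≤ mgrade A (maximalIdeal A) M ↔
      ∀ i < k, Subsingleton (Ext (residueModule A) (ModuleCat.of A M) i) := by
  have rees (n : ℕ) := ModuleCat.exists_isRegular_tfae (maximalIdeal A) n (ModuleCat.of A M)
    (Submodule.top_ne_ideal_smul_of_le_jacobson_annihilator
      (maximalIdeal_le_jacobson _)).symm.lt_top
  constructor
  · intro hk i hik
    by_contra hi
    have : mgrade A (maximalIdeal A) M ≤ i := by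
      refine sSup_le ?_
      rintro _ ⟨rs, hmem, hreg, rfl⟩
      by_contra! hlen
      have regular_imp_ext := (rees rs.length).out 3 1
      exact hi (regular_imp_ext.mp ⟨rs, rfl, hmem, hreg⟩ i (by exact_mod_cast hlen))
    exact absurd (hk.trans this) (by simpa using hik)
  · intro h
    obtain ⟨rs, hlen, hmem, hreg⟩ := ((rees k).out 1 3).mp h
    exact le_sSup ⟨rs, hmem, hreg, by rw [hlen]⟩

variable {L M N : Type u} [AddCommGroup L] [Module A L] [Module.Finite A L] [Nontrivial L]
  [AddCommGroup M] [Module A M] [Module.Finite A M] [Nontrivial M]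
  [AddCommGroup N] [Module A N] [Module.Finite A N] [Nontrivial N]

theorem le_mgrade_prod {k : ℕ} (hM : (k : ℕ∞) ≤ mgrade A (maximalIdeal A) M)
    (hN : (k : ℕ∞) ≤ mgrade A (maximalIdeal A) N) :
    (k : ℕ∞) ≤ mgrade A (maximalIdeal A) (M × N) := by
  have hS := ModuleCat.shortComplex_shortExact
    (ModuleCat.shortComplexOfCompEqZero (LinearMap.inl A M N) (LinearMap.snd A M N)
      (by ext; simp))
    Function.Exact.inl_snd LinearMap.inl_injective LinearMap.snd_surjective
  rw [le_mgrade_maximalIdeal_iff_subsingleton_ext] at *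
  exact fun i hi => Ext.subsingleton_X₂_of_shortExact hS (hM i hi) (hN i hi)

theorem mgrade_eq_add_one_of_exact {n : ℕ} {f : L →ₗ[A] M} {g : M →ₗ[A] N}
    (hf : Function.Injective f) (hfg : Function.Exact f g) (hg : Function.Surjective g)
    (hN : mgrade A (maximalIdeal A) N = n) (hM : (n : ℕ∞) + 1 ≤ mgrade A (maximalIdeal A) M) :
    mgrade A (maximalIdeal A) L = n + 1 := by
  have hS := ModuleCat.shortComplex_shortExact
    (ModuleCat.shortComplexOfCompEqZero f g hfg.linearMap_comp_eq_zero) hfg hf hg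
  have extN := (le_mgrade_maximalIdeal_iff_subsingleton_ext N n).mp hN.ge
  have extN_ne : ¬ Subsingleton (Ext (residueModule A) (ModuleCat.of A N) n) := fun h => by
    have := (le_mgrade_maximalIdeal_iff_subsingleton_ext N (n + 1)).mpr fun i hi =>
      (Nat.lt_succ_iff_lt_or_eq.mp hi).elim (extN i) (· ▸ h)
    rw [hN] at this
    exact absurd (by exact_mod_cast this) n.not_succ_le_self
  have extM := (le_mgrade_maximalIdeal_iff_subsingleton_ext M (n + 1)).mp (by exact_mod_cast hM)
  apply le_antisymm
  · by_contra! h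
    have extL :=
      (le_mgrade_maximalIdeal_iff_subsingleton_ext L (n + 2)).mp (Order.add_one_le_of_lt h)
    exact extN_ne <|
      Ext.subsingleton_X₃_of_shortExact hS (extM n n.lt_succ_self) (extL (n + 1) (by omega))
  · exact_mod_cast (le_mgrade_maximalIdeal_iff_subsingleton_ext L (n + 1)).mpr fun i hi =>
      Ext.subsingleton_X₁_of_le hS (fun j hj => extM j (by omega)) extN i (by omega)

end Depth

theorem RingTheory.Sequence.isRegular_map_algebraMap_iff {A B M : Type*} [CommRing A]
    [CommRing B] [Algebra A B] [AddCommGroup M] [Module A M] [Module B M] [IsScalarTower A B M]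
    (rs : List A) : IsRegular M (rs.map (algebraMap A B)) ↔ IsRegular M rs :=
  (AddEquiv.refl M).isRegular_congr <| List.forall₂_map_left_iff.mpr <|
    List.forall₂_same.mpr fun r _ => algebraMap_smul B r

theorem mgrade_eq_mgrade_map_algebraMap {A B : Type u} [CommRing A] [CommRing B] [Algebra A B]
    (hsurj : Function.Surjective (algebraMap A B)) (I : Ideal A)
    (M : Type u) [AddCommGroup M] [Module A M] [Module B M] [IsScalarTower A B M] :
    mgrade A I M = mgrade B (I.map (algebraMap A B)) M := by
  apply le_antisymm
  · refine sSup_le ?_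
    rintro _ ⟨rs, hmem, hreg, rfl⟩
    refine le_sSup
      ⟨rs.map (algebraMap A B), ?_, (isRegular_map_algebraMap_iff rs).mpr hreg, by simp⟩
    simpa using fun r hr => Ideal.mem_map_of_mem _ (hmem r hr)
  · refine sSup_le ?_
    rintro _ ⟨bs, hmem, hreg, rfl⟩
    choose! lift hlift_mem hlift using fun b (hb : b ∈ I.map (algebraMap A B)) =>
      (Ideal.mem_map_iff_of_surjective _ hsurj).mp hb
    have hbs : (bs.map lift).map (algebraMap A B) = bs := by
      rw [List.map_map]
      exact List.map_congr_left (fun b hb => hlift b (hmem b hb)) |>.trans bs.map_id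
    refine le_sSup
      ⟨bs.map lift, ?_, (isRegular_map_algebraMap_iff _).mp (hbs ▸ hreg), by simp⟩
    simpa using fun b hb => hlift_mem b (hmem b hb)

namespace fiberProd

variable {R S T : Type u} [CommRing R] [CommRing S] [CommRing T] {πR : R →+* T} {πS : S →+* T}

instance algebraLeft : Algebra (fiberProd πR πS) R := (etaR πR πS).toAlgebra

instance algebraRight : Algebra (fiberProd πR πS) S := (etaS πR πS).toAlgebra

instance algebraBase : Algebra (fiberProd πR πS) T := (πR.comp (etaR πR πS)).toAlgebra

theorem etaR_surjective (hπS : Function.Surjective πS) : Function.Surjective (etaR πR πS) := by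
  intro r
  obtain ⟨s, hs⟩ := hπS (πR r)
  exact ⟨⟨(r, s), hs.symm⟩, rfl⟩

theorem etaS_surjective (hπR : Function.Surjective πR) : Function.Surjective (etaS πR πS) := by
  intro s
  obtain ⟨r, hr⟩ := hπR (πS s)
  exact ⟨⟨(r, s), hr⟩, rfl⟩

variable (πR πS) in
def toProd : fiberProd πR πS →ₗ[fiberProd πR πS] R × S :=
  (Algebra.linearMap _ R).prod (Algebra.linearMap _ S)

variable (πR πS) in
def diff : R × S →ₗ[fiberProd πR πS] T where
  toFun x := πR x.1 - πS x.2
  map_add' x y := by simp only [Prod.fst_add, Prod.snd_add, map_add]; ring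
  map_smul' a x := by
    have h : πR a.1.1 = πS a.1.2 := a.prop
    change πR (a.1.1 * x.1) - πS (a.1.2 * x.2) = πR a.1.1 * (πR x.1 - πS x.2)
    rw [map_mul, map_mul, h, mul_sub]

theorem toProd_injective : Function.Injective (toProd πR πS) :=
  fun _ _ => Subtype.ext

theorem diff_surjective (hπR : Function.Surjective πR) : Function.Surjective (diff πR πS) := by
  intro t
  obtain ⟨r, rfl⟩ := hπR t
  exact ⟨(r, 0), by simp [diff]⟩

theorem exact_toProd_diff : Function.Exact (toProd πR πS) (diff πR πS) := by
  rintro ⟨r, s⟩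
  refine sub_eq_zero.trans ⟨fun h => ⟨⟨(r, s), h⟩, rfl⟩, ?_⟩
  rintro ⟨a, ha⟩
  rw [← ha]
  exact a.prop

variable (πR) in
theorem finite_left (hπS : Function.Surjective πS) : Module.Finite (fiberProd πR πS) R :=
  Module.Finite.of_surjective (Algebra.linearMap _ R) (etaR_surjective hπS)

variable (πS) in
theorem finite_right (hπR : Function.Surjective πR) : Module.Finite (fiberProd πR πS) S :=
  Module.Finite.of_surjective (Algebra.linearMap _ S) (etaS_surjective hπR)

theorem algebraMap_base_surjective (hπR : Function.Surjective πR)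
    (hπS : Function.Surjective πS) :
    Function.Surjective (algebraMap (fiberProd πR πS) T) :=
  hπR.comp (etaR_surjective hπS)

theorem finite_base (hπR : Function.Surjective πR) (hπS : Function.Surjective πS) :
    Module.Finite (fiberProd πR πS) T :=
  Module.Finite.of_surjective (Algebra.linearMap _ T) (algebraMap_base_surjective hπR hπS)

variable [IsLocalRing (fiberProd πR πS)]

variable (πR) in
theorem mgrade_maximalIdeal_left (hπS : Function.Surjective πS) :
    mgrade (fiberProd πR πS) (maximalIdeal _) R = mgrade R (mExtR πR πS) R :=
  mgrade_eq_mgrade_map_algebraMap (A := fiberProd πR πS) (M := R) (etaR_surjective hπS) _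

variable (πS) in
theorem mgrade_maximalIdeal_right (hπR : Function.Surjective πR) :
    mgrade (fiberProd πR πS) (maximalIdeal _) S = mgrade S (mExtS πR πS) S :=
  mgrade_eq_mgrade_map_algebraMap (A := fiberProd πR πS) (M := S) (etaS_surjective hπR) _

theorem mgrade_maximalIdeal_base (hπR : Function.Surjective πR) (hπS : Function.Surjective πS) :
    mgrade (fiberProd πR πS) (maximalIdeal _) T = mgrade T (mExtT πR πS) T :=
  mgrade_eq_mgrade_map_algebraMap (A := fiberProd πR πS) (M := T)
    (algebraMap_base_surjective hπR hπS) _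

end fiberProd

open fiberProd in
theorem statement_9_general
    {R S T : Type u} [CommRing R] [CommRing S] [CommRing T]
    [IsLocalRing R] [IsLocalRing S] [IsLocalRing T]
    (πR : R →+* T) (πS : S →+* T)
    (hπR : Function.Surjective πR) (hπS : Function.Surjective πS)
    [IsNoetherianRing ↥(fiberProd πR πS)] [IsLocalRing ↥(fiberProd πR πS)]
    (n : ℕ)
    (hgT : mgrade T (mExtT πR πS) T = (n : ℕ∞))
    (hgR : (n : ℕ∞) < mgrade R (mExtR πR πS) R)
    (hgS : (n : ℕ∞) < mgrade S (mExtS πR πS) S) :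
    rdepth (↥(fiberProd πR πS)) = (n : ℕ∞) + 1 := by
  have := finite_left πR hπS
  have := finite_right πS hπR
  have := finite_base hπR hπS
  have hR := (mgrade_maximalIdeal_left πR hπS).symm ▸ Order.add_one_le_of_lt hgR
  have hS := (mgrade_maximalIdeal_right πS hπR).symm ▸ Order.add_one_le_of_lt hgS
  exact mgrade_eq_add_one_of_exact toProd_injective exact_toProd_diff (diff_surjective hπR)
    ((mgrade_maximalIdeal_base hπR hπS).trans hgT) (le_mgrade_prod hR hS)

theorem statement_9
    {R S T : Type u} [CommRing R] [CommRing S] [CommRing T]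
    [IsNoetherianRing R] [IsNoetherianRing S] [IsNoetherianRing T]
    [IsLocalRing R] [IsLocalRing S] [IsLocalRing T]
    (πR : R →+* T) (πS : S →+* T)
    (hπR : Function.Surjective πR) (hπS : Function.Surjective πS)
    (hkR : RingHom.ker πR ≠ ⊥) (hkS : RingHom.ker πS ≠ ⊥)
    [IsNoetherianRing ↥(fiberProd πR πS)] [IsLocalRing ↥(fiberProd πR πS)]
    (n : ℕ)
    (hgT : mgrade T (mExtT πR πS) T = (n : ℕ∞))
    (hgR : (n : ℕ∞) < mgrade R (mExtR πR πS) R)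
    (hgS : (n : ℕ∞) < mgrade S (mExtS πR πS) S) :
    rdepth (↥(fiberProd πR πS)) = (n : ℕ∞) + 1 :=
  statement_9_general πR πS hπR hπS n hgT hgR hgS
end

section
/- Let (R, m_R, k) and (S, m_S, k) be commutative Noetherian local rings with common residue field k, with R ≠ k ≠ S, and let R ×_k S be the fiber product over the residue field (with structure maps the canonical surjections R → k and S → k). Then depth(R ×_k S) = min{ depth(R), depth(S), 1 }. -/
/-!
Common definitions: Betti numbers, Poincaré series, grade, depth, embedding
dimension, fiber product rings, and large homomorphisms.
-/

open CategoryTheory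

universe u

/-!
The maximal ideal of `F = R ×_k S` consists of the pairs with both components in the maximal
ideals. A nonzerodivisor `a` of `F` has nonzerodivisor components: `a₁` kills nothing in
`m_R × 0 ⊆ F`, and since `m_R ≠ 0` it cannot kill a unit either. Conversely a pair of
nonzerodivisors is one in `F`, so `depth F ≥ 1` exactly when `depth R, depth S ≥ 1`. No regular
sequence of `F` has length two: for such `a` and any `b` in the maximal ideal, `b` kills the
nonzero class of `(a₁, 0)` in `F / aF`.
-/

open IsLocalRing RingTheory.Sequence

theorem mgrade_le_one_of_not_isSMulRegular_quotSMulTop {A M : Type u} [CommRing A]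
    [AddCommGroup M] [Module A M] {I : Ideal A}
    (h : ∀ a ∈ I, ∀ b ∈ I, IsSMulRegular M a → ¬ IsSMulRegular (QuotSMulTop a M) b) :
    mgrade A I M ≤ 1 := by
  refine sSup_le ?_
  rintro n ⟨_ | ⟨a, _ | ⟨b, rs⟩⟩, hmem, hreg, rfl⟩
  · simp
  · simp
  · obtain ⟨ha, hrest⟩ := (isWeaklyRegular_cons_iff M a (b :: rs)).mp hreg.toIsWeaklyRegular
    exact absurd ((isWeaklyRegular_cons_iff _ b rs).mp hrest).1
      (h a (hmem a (by simp)) b (hmem b (by simp)) ha)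

namespace IsLocalRing

variable {A : Type u} [CommRing A] [IsLocalRing A]

theorem one_le_mgrade_maximalIdeal_iff {M : Type u} [AddCommGroup M] [Module A M]
    [Module.Finite A M] [Nontrivial M] :
    1 ≤ mgrade A (maximalIdeal A) M ↔ ∃ x ∈ maximalIdeal A, IsSMulRegular M x := by
  constructor
  · intro h
    by_contra! hnone
    refine (Order.one_le_iff_ne_zero.mp h) (le_antisymm (sSup_le ?_) bot_le)
    rintro n ⟨_ | ⟨a, rs⟩, hmem, hreg, rfl⟩
    · simp
    · exact absurd ((isRegular_cons_iff M a rs).mp hreg).1 (hnone a (hmem a (by simp)))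
  · rintro ⟨x, hx, hreg⟩
    have hmem : ∀ r ∈ [x], r ∈ maximalIdeal A := by simpa using hx
    exact le_sSup ⟨[x], hmem, .of_isWeaklyRegular_of_mem_maximalIdeal M hmem
      ((isWeaklyRegular_singleton_iff M x).mpr hreg), by simp⟩

theorem isSMulRegular_of_forall_mem_maximalIdeal (hm : maximalIdeal A ≠ ⊥) {x : A}
    (h : ∀ c ∈ maximalIdeal A, x * c = 0 → c = 0) : IsSMulRegular A x := by
  obtain ⟨y, hy, hy0⟩ := (Submodule.ne_bot_iff _).mp hm
  refine .of_right_eq_zero_of_smul fun c hc => ?_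
  by_cases hcm : c ∈ maximalIdeal A
  · exact h c hcm hc
  · have hunit : IsUnit c := by simpa [mem_maximalIdeal, mem_nonunits_iff] using hcm
    have hx : x = 0 := hunit.mul_left_eq_zero.mp hc
    exact absurd (h y hy (by rw [hx, zero_mul])) hy0

end IsLocalRing

section FiberProd

variable {R S T : Type u} [CommRing R] [CommRing S] [CommRing T] {πR : R →+* T} {πS : S →+* T}

theorem mk_mem_fiberProd_of_eq_zero {r : R} {s : S} (hr : πR r = 0) (hs : πS s = 0) :
    (r, s) ∈ fiberProd πR πS :=
  show πR r = πS s by rw [hr, hs]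

theorem eq_zero_of_fst_mul_eq_zero {a : fiberProd πR πS}
    (ha : IsSMulRegular (fiberProd πR πS) a) {c : R} (hc : πR c = 0)
    (h : (a : R × S).1 * c = 0) : c = 0 := by
  have hmul : a • (⟨(c, 0), mk_mem_fiberProd_of_eq_zero hc (map_zero πS)⟩ : fiberProd πR πS) = 0 :=
    Subtype.ext (Prod.ext h (mul_zero _))
  exact congrArg (fun z : fiberProd πR πS => (z : R × S).1) (ha.right_eq_zero_of_smul hmul)

theorem eq_zero_of_snd_mul_eq_zero {a : fiberProd πR πS}
    (ha : IsSMulRegular (fiberProd πR πS) a) {d : S} (hd : πS d = 0)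
    (h : (a : R × S).2 * d = 0) : d = 0 := by
  have hmul : a • (⟨(0, d), mk_mem_fiberProd_of_eq_zero (map_zero πR) hd⟩ : fiberProd πR πS) = 0 :=
    Subtype.ext (Prod.ext (mul_zero _) h)
  exact congrArg (fun z : fiberProd πR πS => (z : R × S).2) (ha.right_eq_zero_of_smul hmul)

theorem isSMulRegular_mk_fiberProd {x : R} {y : S} (hx : IsSMulRegular R x)
    (hy : IsSMulRegular S y) (hxy : (x, y) ∈ fiberProd πR πS) :
    IsSMulRegular (fiberProd πR πS) (⟨(x, y), hxy⟩ : fiberProd πR πS) := by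
  refine .of_right_eq_zero_of_smul fun c hc => Subtype.ext (Prod.ext ?_ ?_)
  · exact hx.right_eq_zero_of_smul (congrArg (fun z : fiberProd πR πS => (z : R × S).1) hc)
  · exact hy.right_eq_zero_of_smul (congrArg (fun z : fiberProd πR πS => (z : R × S).2) hc)

/-- The witness: `b • (a₁, 0) = a • (b₁, 0)`, while `(a₁, 0) ∉ a • F` because `a₂` is regular
and `(1, 0) ∉ F`. -/
theorem not_isSMulRegular_quotSMulTop_fiberProd [Nontrivial T] {a b : fiberProd πR πS}
    (ha : πR (a : R × S).1 = 0) (hb : πR (b : R × S).1 = 0)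
    (ha₁ : IsSMulRegular R (a : R × S).1) (ha₂ : IsSMulRegular S (a : R × S).2) :
    ¬ IsSMulRegular (QuotSMulTop a (fiberProd πR πS)) b := by
  set t₀ : fiberProd πR πS := ⟨((a : R × S).1, 0), mk_mem_fiberProd_of_eq_zero ha (map_zero πS)⟩
  set t₁ : fiberProd πR πS := ⟨((b : R × S).1, 0), mk_mem_fiberProd_of_eq_zero hb (map_zero πS)⟩
  have hbt : b • t₀ = a • t₁ :=
    Subtype.ext (Prod.ext (mul_comm _ _) (by simp [t₀, t₁]))
  have ht₀ : (Submodule.Quotient.mk t₀ : QuotSMulTop a (fiberProd πR πS)) ≠ 0 := by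
    rw [Ne, Submodule.Quotient.mk_eq_zero, ← SetLike.mem_coe, Submodule.coe_pointwise_smul]
    rintro ⟨w, -, hw⟩
    have h₁ : (a : R × S).1 * (w : R × S).1 = (a : R × S).1 * 1 := by
      simpa [t₀] using congrArg (fun z : fiberProd πR πS => (z : R × S).1) hw
    have h₂ : (a : R × S).2 * (w : R × S).2 = (a : R × S).2 * 0 := by
      simpa [t₀] using congrArg (fun z : fiberProd πR πS => (z : R × S).2) hw
    have hw' : πR (w : R × S).1 = πS (w : R × S).2 := w.2
    rw [ha₁ h₁, ha₂ h₂, map_one, map_zero] at hw'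
    exact one_ne_zero hw'
  refine fun hreg => ht₀ (hreg.right_eq_zero_of_smul ?_)
  rw [← Submodule.Quotient.mk_smul, hbt, Submodule.Quotient.mk_eq_zero]
  exact Submodule.smul_mem_pointwise_smul t₁ a ⊤ trivial

end FiberProd

section LocalFiberProd

variable {R S k : Type u} [CommRing R] [CommRing S] [Field k] {πR : R →+* k} {πS : S →+* k}

theorem mem_maximalIdeal_fiberProd_iff [IsLocalRing (fiberProd πR πS)]
    (hπR : Function.Surjective πR) (hπS : Function.Surjective πS) {a : fiberProd πR πS} :
    a ∈ maximalIdeal (fiberProd πR πS) ↔ πR (a : R × S).1 = 0 := by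
  have hsurj : Function.Surjective (πR.comp (etaR πR πS)) := fun t => by
    obtain ⟨r, hr⟩ := hπR t
    obtain ⟨s, hs⟩ := hπS t
    exact ⟨⟨(r, s), show πR r = πS s by rw [hr, hs]⟩, hr⟩
  rw [← ker_eq_maximalIdeal _ hsurj, RingHom.mem_ker]
  rfl

theorem isSMulRegular_fst_of_isSMulRegular_fiberProd [IsLocalRing R]
    (hπR : Function.Surjective πR) (hkR : RingHom.ker πR ≠ ⊥) {a : fiberProd πR πS}
    (ha : IsSMulRegular (fiberProd πR πS) a) : IsSMulRegular R (a : R × S).1 := by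
  rw [ker_eq_maximalIdeal πR hπR] at hkR
  refine isSMulRegular_of_forall_mem_maximalIdeal hkR fun c hc => ?_
  rw [← ker_eq_maximalIdeal πR hπR, RingHom.mem_ker] at hc
  exact eq_zero_of_fst_mul_eq_zero ha hc

theorem isSMulRegular_snd_of_isSMulRegular_fiberProd [IsLocalRing S]
    (hπS : Function.Surjective πS) (hkS : RingHom.ker πS ≠ ⊥) {a : fiberProd πR πS}
    (ha : IsSMulRegular (fiberProd πR πS) a) : IsSMulRegular S (a : R × S).2 := by
  rw [ker_eq_maximalIdeal πS hπS] at hkS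
  refine isSMulRegular_of_forall_mem_maximalIdeal hkS fun d hd => ?_
  rw [← ker_eq_maximalIdeal πS hπS, RingHom.mem_ker] at hd
  exact eq_zero_of_snd_mul_eq_zero ha hd

variable [IsLocalRing R] [IsLocalRing S] [IsLocalRing (fiberProd πR πS)]

theorem one_le_rdepth_fiberProd_iff (hπR : Function.Surjective πR)
    (hπS : Function.Surjective πS) (hkR : RingHom.ker πR ≠ ⊥) (hkS : RingHom.ker πS ≠ ⊥) :
    1 ≤ rdepth (fiberProd πR πS) ↔ 1 ≤ rdepth R ∧ 1 ≤ rdepth S := by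
  simp only [rdepth, one_le_mgrade_maximalIdeal_iff]
  constructor
  · rintro ⟨a, ham, ha⟩
    have ha₁ : πR (a : R × S).1 = 0 := (mem_maximalIdeal_fiberProd_iff hπR hπS).mp ham
    have ha₂ : πS (a : R × S).2 = 0 := a.2.symm.trans ha₁
    refine ⟨⟨_, ?_, isSMulRegular_fst_of_isSMulRegular_fiberProd hπR hkR ha⟩,
      ⟨_, ?_, isSMulRegular_snd_of_isSMulRegular_fiberProd hπS hkS ha⟩⟩
    · rwa [← ker_eq_maximalIdeal πR hπR, RingHom.mem_ker]
    · rwa [← ker_eq_maximalIdeal πS hπS, RingHom.mem_ker]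
  · rintro ⟨⟨x, hxm, hx⟩, ⟨y, hym, hy⟩⟩
    rw [← ker_eq_maximalIdeal πR hπR, RingHom.mem_ker] at hxm
    rw [← ker_eq_maximalIdeal πS hπS, RingHom.mem_ker] at hym
    have hxy := mk_mem_fiberProd_of_eq_zero hxm hym
    exact ⟨_, (mem_maximalIdeal_fiberProd_iff hπR hπS).mpr hxm,
      isSMulRegular_mk_fiberProd hx hy hxy⟩

theorem rdepth_fiberProd_le_one (hπR : Function.Surjective πR)
    (hπS : Function.Surjective πS) (hkR : RingHom.ker πR ≠ ⊥) (hkS : RingHom.ker πS ≠ ⊥) :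
    rdepth (fiberProd πR πS) ≤ 1 :=
  mgrade_le_one_of_not_isSMulRegular_quotSMulTop fun _ ham _ hbm ha =>
    not_isSMulRegular_quotSMulTop_fiberProd
      ((mem_maximalIdeal_fiberProd_iff hπR hπS).mp ham)
      ((mem_maximalIdeal_fiberProd_iff hπR hπS).mp hbm)
      (isSMulRegular_fst_of_isSMulRegular_fiberProd hπR hkR ha)
      (isSMulRegular_snd_of_isSMulRegular_fiberProd hπS hkS ha)

end LocalFiberProd

theorem statement_12_general
    {R S k : Type u} [CommRing R] [CommRing S] [Field k]
    [IsLocalRing R] [IsLocalRing S]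
    (πR : R →+* k) (πS : S →+* k)
    (hπR : Function.Surjective πR) (hπS : Function.Surjective πS)
    (hkR : RingHom.ker πR ≠ ⊥) (hkS : RingHom.ker πS ≠ ⊥)
    [IsLocalRing ↥(fiberProd πR πS)] :
    rdepth (↥(fiberProd πR πS)) = min (min (rdepth R) (rdepth S)) 1 := by
  have hiff := one_le_rdepth_fiberProd_iff hπR hπS hkR hkS
  rcases le_or_gt 1 (rdepth (fiberProd πR πS)) with h | h
  · obtain ⟨hR, hS⟩ := hiff.mp h
    rw [le_antisymm (rdepth_fiberProd_le_one hπR hπS hkR hkS) h, min_eq_right (le_min hR hS)]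
  · have hRS : ¬ (1 ≤ rdepth R ∧ 1 ≤ rdepth S) := fun hRS => h.not_ge (hiff.mpr hRS)
    simp only [not_and_or, not_le, Order.lt_one_iff] at hRS
    rw [Order.lt_one_iff.mp h]
    rcases hRS with h0 | h0 <;> simp [h0]

theorem statement_12
    {R S k : Type u} [CommRing R] [CommRing S] [Field k]
    [IsNoetherianRing R] [IsNoetherianRing S]
    [IsLocalRing R] [IsLocalRing S]
    (πR : R →+* k) (πS : S →+* k)
    (hπR : Function.Surjective πR) (hπS : Function.Surjective πS)
    (hkR : RingHom.ker πR ≠ ⊥) (hkS : RingHom.ker πS ≠ ⊥)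
    [IsNoetherianRing ↥(fiberProd πR πS)] [IsLocalRing ↥(fiberProd πR πS)] :
    rdepth (↥(fiberProd πR πS)) = min (min (rdepth R) (rdepth S)) 1 :=
  statement_12_general πR πS hπR hπS hkR hkS
end
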